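/- If a connected graph on n vertices has its MST edges contained in the union of the first p strata, then Kruskal-EDS run on the stratification accepts n−1 edges before reaching stratum p, so the number of strata sorted is at most p. -/

import Mathlib

open Classical in
/-- One greedy step of Kruskal's algorithm: accept the edge `e` iff its endpoints lie in
distinct connected components of the graph formed by the previously accepted edges. -/
noncomputable def kruskalStep {V : Type*} (acc : List (V × V)) (e : V × V) : List (V × V) :=
  if (SimpleGraph.fromEdgeSet ((fun q : V × V => s(q.1, q.2)) '' {q | q ∈ acc})).Reachable
       e.1 e.2
  then acc else acc ++ [e]

/-- Kruskal's greedy algorithm, processing the given list of edges in order. -/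
noncomputable def kruskal {V : Type*} (edges : List (V × V)) : List (V × V) :=
  edges.foldl kruskalStep []

/-!
The weights play no role in the count. Whatever order the pairs come in, the greedy acceptance
keeps the accepted edges a forest, and every listed pair ends up with its endpoints connected by
accepted edges. The first `p` strata contain the spanning tree `T`, so they span a connected
graph; hence the accepted edges form a spanning tree, which has `n − 1` edges.
-/

open SimpleGraph

section

variable {V : Type*}

lemma SimpleGraph.Connected.of_forall_adj_reachable {G H : SimpleGraph V} (hG : G.Connected)
    (h : ∀ ⦃x y⦄, G.Adj x y → H.Reachable x y) : H.Connected := by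
  refine (connected_iff H).mpr ⟨fun x y => ?_, hG.nonempty⟩
  obtain ⟨W⟩ := hG.preconnected x y
  induction W with
  | nil => rfl
  | cons hadj _ ih => exact (h hadj).trans ih

def pairGraph (l : List (V × V)) : SimpleGraph V :=
  fromEdgeSet ((fun q : V × V => s(q.1, q.2)) '' {q | q ∈ l})

@[simp] lemma pairGraph_nil : pairGraph ([] : List (V × V)) = ⊥ := by
  simp [pairGraph]

lemma pairGraph_append_singleton (l : List (V × V)) (e : V × V) :
    pairGraph (l ++ [e]) = pairGraph l ⊔ edge e.1 e.2 := by
  have h : {q | q ∈ l ++ [e]} = {q | q ∈ l} ∪ {e} := by ext; simp [or_comm]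
  rw [pairGraph, h, Set.image_union, Set.image_singleton, fromEdgeSet_union]
  rfl

lemma pairGraph_mono {l₁ l₂ : List (V × V)} (h : l₁ ⊆ l₂) : pairGraph l₁ ≤ pairGraph l₂ :=
  fromEdgeSet_mono (Set.image_mono fun _ hq => h hq)

lemma reachable_pairGraph_of_mem {l : List (V × V)} {q : V × V} (hq : q ∈ l) :
    (pairGraph l).Reachable q.1 q.2 := by
  by_cases hne : q.1 = q.2
  · exact hne ▸ Reachable.refl _
  · exact Adj.reachable ((fromEdgeSet_adj _).mpr ⟨⟨q, hq, rfl⟩, hne⟩)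

lemma finite_edgeSet_pairGraph (l : List (V × V)) : (pairGraph l).edgeSet.Finite := by
  rw [pairGraph, edgeSet_fromEdgeSet]
  exact ((List.finite_toSet l).image _).sdiff

lemma kruskalStep_of_reachable {acc : List (V × V)} {e : V × V}
    (h : (pairGraph acc).Reachable e.1 e.2) : kruskalStep acc e = acc := if_pos h

lemma kruskalStep_of_not_reachable {acc : List (V × V)} {e : V × V}
    (h : ¬ (pairGraph acc).Reachable e.1 e.2) : kruskalStep acc e = acc ++ [e] := if_neg h

lemma subset_kruskalStep (acc : List (V × V)) (e : V × V) : acc ⊆ kruskalStep acc e := by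
  unfold kruskalStep
  split_ifs
  exacts [List.Subset.refl _, List.subset_append_left _ _]

lemma reachable_pairGraph_kruskalStep (acc : List (V × V)) (e : V × V) :
    (pairGraph (kruskalStep acc e)).Reachable e.1 e.2 := by
  by_cases h : (pairGraph acc).Reachable e.1 e.2
  · rwa [kruskalStep_of_reachable h]
  · rw [kruskalStep_of_not_reachable h]
    exact reachable_pairGraph_of_mem (List.mem_append_right _ (List.mem_singleton_self e))

lemma isAcyclic_pairGraph_kruskalStep {acc : List (V × V)} (e : V × V)
    (hacc : (pairGraph acc).IsAcyclic) : (pairGraph (kruskalStep acc e)).IsAcyclic := by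
  by_cases h : (pairGraph acc).Reachable e.1 e.2
  · rwa [kruskalStep_of_reachable h]
  · rw [kruskalStep_of_not_reachable h, pairGraph_append_singleton]
    exact hacc.sup_edge_of_not_reachable h

/-- Each accepted pair contributes a new edge, since its endpoints were not yet connected. -/
lemma ncard_edgeSet_pairGraph_kruskalStep {acc : List (V × V)} (e : V × V)
    (hacc : (pairGraph acc).edgeSet.ncard = acc.length) :
    (pairGraph (kruskalStep acc e)).edgeSet.ncard = (kruskalStep acc e).length := by
  by_cases h : (pairGraph acc).Reachable e.1 e.2
  · rwa [kruskalStep_of_reachable h]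
  · have hne : e.1 ≠ e.2 := fun h' => h (h' ▸ Reachable.refl _)
    have hnew : s(e.1, e.2) ∉ (pairGraph acc).edgeSet := fun h' => h (Adj.reachable h')
    rw [kruskalStep_of_not_reachable h, pairGraph_append_singleton, edgeSet_sup,
      edgeSet_edge_of_ne hne, Set.union_singleton,
      Set.ncard_insert_of_notMem hnew (finite_edgeSet_pairGraph acc), hacc,
      List.length_append, List.length_singleton]

lemma foldl_kruskalStep_induction (P : List (V × V) → Prop)
    (hstep : ∀ acc e, P acc → P (kruskalStep acc e)) (l : List (V × V)) {acc : List (V × V)}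
    (hacc : P acc) : P (l.foldl kruskalStep acc) := by
  induction l generalizing acc with
  | nil => exact hacc
  | cons e l ih => exact ih (hstep acc e hacc)

lemma reachable_pairGraph_foldl_kruskalStep {l : List (V × V)} {q : V × V} (hq : q ∈ l)
    (acc : List (V × V)) : (pairGraph (l.foldl kruskalStep acc)).Reachable q.1 q.2 := by
  induction l generalizing acc with
  | nil => cases hq
  | cons e l ih =>
    rcases List.mem_cons.mp hq with rfl | hq
    · refine (reachable_pairGraph_kruskalStep acc q).mono (pairGraph_mono ?_)
      exact foldl_kruskalStep_induction (kruskalStep acc q ⊆ ·)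
        (fun _ e h => List.Subset.trans h (subset_kruskalStep _ e)) l (List.Subset.refl _)
    · exact ih hq _

lemma isAcyclic_pairGraph_kruskal (l : List (V × V)) : (pairGraph (kruskal l)).IsAcyclic :=
  foldl_kruskalStep_induction (fun acc => (pairGraph acc).IsAcyclic)
    (fun _ => isAcyclic_pairGraph_kruskalStep) l (by simp)

lemma ncard_edgeSet_pairGraph_kruskal (l : List (V × V)) :
    (pairGraph (kruskal l)).edgeSet.ncard = (kruskal l).length :=
  foldl_kruskalStep_induction (fun acc => (pairGraph acc).edgeSet.ncard = acc.length)
    (fun _ => ncard_edgeSet_pairGraph_kruskalStep) l (by simp)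

lemma isTree_pairGraph_kruskal {l : List (V × V)} (hl : (pairGraph l).Connected) :
    (pairGraph (kruskal l)).IsTree := by
  refine ⟨hl.of_forall_adj_reachable fun x y hxy => ?_, isAcyclic_pairGraph_kruskal l⟩
  obtain ⟨⟨q, hq, hqxy⟩, -⟩ := (fromEdgeSet_adj _).mp hxy
  rcases Sym2.eq_iff.mp hqxy with ⟨rfl, rfl⟩ | ⟨rfl, rfl⟩
  · exact reachable_pairGraph_foldl_kruskalStep hq []
  · exact (reachable_pairGraph_foldl_kruskalStep hq []).symm

theorem kruskal_length_eq_card_sub_one [Fintype V] {l : List (V × V)}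
    (hl : (pairGraph l).Connected) : (kruskal l).length = Fintype.card V - 1 := by
  classical
  have hcard := (isTree_pairGraph_kruskal hl).card_edgeFinset
  rw [edgeFinset, ← Set.ncard_eq_toFinset_card', ncard_edgeSet_pairGraph_kruskal] at hcard
  omega

end

theorem kruskal_eds_early_termination_general
    {V : Type*} [Fintype V]
    (L : ℕ → List (V × V))
    (T : SimpleGraph V) (hT : T.IsTree)
    (p : ℕ)
    (hTp : T.edgeSet ⊆ (fun q : V × V => s(q.1, q.2)) '' {q | q ∈ (List.range p).flatMap L}) :
    (kruskal ((List.range p).flatMap L)).length = Fintype.card V - 1 :=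
  kruskal_length_eq_card_sub_one (hT.connected.mono ((le_fromEdgeSet_iff _ _).mpr hTp))

/-- **Early termination of Kruskal-EDS.**
Let the edge set of a finite connected graph `G` on `n` vertices be partitioned into
strata `L 0, …, L (k-1)` that are valid for Kruskal (weights nondecreasing across strata,
each stratum sorted internally).  If some minimum spanning tree `T` of `G` has all its
edges in the union of the first `p` strata, then the greedy algorithm run on the
concatenation of the first `p` strata already accepts `n − 1` edges; hence Kruskal-EDS
halts having sorted at most `p` strata. -/
theorem kruskal_eds_early_termination
    {V : Type*} [Fintype V] (G : SimpleGraph V) (w : Sym2 V → ℝ)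
    (hG : G.Connected)
    (k : ℕ) (L : ℕ → List (V × V))
    (hcover : ∀ e : Sym2 V, e ∈ G.edgeSet ↔ ∃ i < k, ∃ q ∈ L i, s(q.1, q.2) = e)
    (hnodup : (((List.range k).flatMap L).map fun q => s(q.1, q.2)).Nodup)
    (hintra : ∀ i < k, (L i).Pairwise (fun q q' => w s(q.1, q.2) ≤ w s(q'.1, q'.2)))
    (hinter : ∀ i j, i < j → j < k →
      ∀ q ∈ L i, ∀ q' ∈ L j, w s(q.1, q.2) ≤ w s(q'.1, q'.2))
    (T : SimpleGraph V) (hTG : T ≤ G) (hT : T.IsTree)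
    (hTmin : ∀ T' : SimpleGraph V, T' ≤ G → T'.IsTree →
      (∑ᶠ e ∈ T.edgeSet, w e) ≤ ∑ᶠ e ∈ T'.edgeSet, w e)
    (p : ℕ) (hpk : p ≤ k)
    (hTp : T.edgeSet ⊆ (fun q : V × V => s(q.1, q.2)) '' {q | q ∈ (List.range p).flatMap L}) :
    (kruskal ((List.range p).flatMap L)).length = Fintype.card V - 1 :=
  kruskal_eds_early_termination_general L T hT p hTp
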